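/- arXiv:alg-geom/9709012 — 4 statements merged into one kernel-verified Lean document; each statement's English description precedes it below -/
import Mathlib

section
/- Let m ≥ 1, g ≥ 1, let A be an m × m matrix over ℚ, and work in the exterior algebra over ℚ on the 2mg generators ζ_i^k for 1 ≤ i ≤ m and 1 ≤ k ≤ 2g. Set ω = Σ_{k=1}^{g} Σ_{i,j=1}^{m} A_{ij}·ζ_i^k ∧ ζ_j^{k+g}. Then ω^{mg}/(mg)! = (−1)^{g·m(m−1)/2}·(det A)^g · Π_{k=1}^{g} (ζ₁^k ∧ ⋯ ∧ ζ_m^k ∧ ζ₁^{k+g} ∧ ⋯ ∧ ζ_m^{k+g}). -/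
/-!
Write `Ω_k = Σ_{i,j} A_{ij} ζ_i^k ζ_j^{k+g}` as `Σ_i ζ_i^k w_i^k` with
`w_i^k = Σ_j A_{ij} ζ_j^{k+g}`. The summands are even and square to zero, so they commute and
`Ω_k^m = m! ∏_i ζ_i^k w_i^k`; moving the odd factors into order costs `(-1)^{m(m-1)/2}`, and
`w_1^k ∧ ⋯ ∧ w_m^k = det A · ζ_1^{k+g} ∧ ⋯ ∧ ζ_m^{k+g}`.
The even blocks `Ω_k` commute with each other and satisfy `Ω_k^{m+1} = 0`, so in the multinomial
expansion of `(Σ_k Ω_k)^{mg}` only `∏_k Ω_k^m` survives, with coefficient `(mg)! / (m!)^g`.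
-/

/-- The generator `ζᵢᵏ` of the exterior algebra over `ℚ` on `2mg` generators: indices
`i : Fin m` and `k : Fin g ⊕ Fin g`, where `Sum.inl k` plays the role of `ζᵢᵏ` for
`1 ≤ k ≤ g` and `Sum.inr k` that of `ζᵢ^{k+g}`. -/
noncomputable def zeta (m g : ℕ) (i : Fin m) (k : Fin g ⊕ Fin g) :
    ExteriorAlgebra ℚ ((Fin m × (Fin g ⊕ Fin g)) → ℚ) :=
  ExteriorAlgebra.ι ℚ (Pi.single (i, k) (1 : ℚ))

theorem Commute.add_pow_eq_choose_nsmul_of_pow_succ_eq_zero {R : Type*} [Semiring R] {x y : R}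
    (h : Commute x y) {a b : ℕ} (hx : x ^ (a + 1) = 0) (hy : y ^ (b + 1) = 0) :
    (x + y) ^ (a + b) = (a + b).choose a • (x ^ a * y ^ b) := by
  rw [h.add_pow', Finset.sum_eq_single_of_mem (a, b) (by simp)]
  rintro ⟨i, j⟩ hij hne
  simp only [ne_eq, Prod.mk.injEq] at hne
  rw [Finset.HasAntidiagonal.mem_antidiagonal] at hij
  rcases le_or_gt i a with hi | hi
  · rw [pow_eq_zero_of_le (by omega) hy, mul_zero, smul_zero]
  · rw [pow_eq_zero_of_le hi hx, zero_mul, smul_zero]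

namespace List

variable {R : Type*} [Semiring R] {m : ℕ}

theorem sum_pow_mul_length_succ_eq_zero :
    ∀ {l : List R}, l.Pairwise Commute → (∀ x ∈ l, x ^ (m + 1) = 0) →
      l.sum ^ (m * l.length + 1) = 0
  | [], _, _ => by simp
  | a :: t, hc, hn => by
    rw [pairwise_cons] at hc
    rw [forall_mem_cons] at hn
    exact (Commute.list_sum_right a t hc.1).add_pow_eq_zero_of_add_le_succ_of_pow_eq_zero hn.1
      (sum_pow_mul_length_succ_eq_zero hc.2 hn.2) (by rw [length_cons, Nat.mul_succ]; omega)

theorem factorial_pow_nsmul_sum_pow :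
    ∀ {l : List R}, l.Pairwise Commute → (∀ x ∈ l, x ^ (m + 1) = 0) →
      m.factorial ^ l.length • l.sum ^ (m * l.length) =
        (m * l.length).factorial • (l.map (· ^ m)).prod
  | [], _, _ => by simp
  | a :: t, hc, hn => by
    rw [pairwise_cons] at hc
    rw [forall_mem_cons] at hn
    have hcoef : (m + m * t.length).choose m * m.factorial * (m * t.length).factorial =
        (m * (t.length + 1)).factorial := by
      rw [Nat.choose_symm_add, Nat.add_choose_mul_factorial_mul_factorial, Nat.mul_succ,
        Nat.add_comm]
    calc m.factorial ^ (t.length + 1) • (a + t.sum) ^ (m * (t.length + 1))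
        = ((m + m * t.length).choose m * m.factorial) •
            (a ^ m * (m.factorial ^ t.length • t.sum ^ (m * t.length))) := by
          rw [Nat.mul_succ, Nat.add_comm _ m, (Commute.list_sum_right a t hc.1)
            |>.add_pow_eq_choose_nsmul_of_pow_succ_eq_zero hn.1
              (sum_pow_mul_length_succ_eq_zero hc.2 hn.2), mul_smul_comm, smul_smul, smul_smul]
          congr 1
          ring
      _ = (m * (t.length + 1)).factorial • (a ^ m * (t.map (· ^ m)).prod) := by
          rw [factorial_pow_nsmul_sum_pow hc.2 hn.2, mul_smul_comm, smul_smul, hcoef]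

theorem prod_ofFn_smul {S A : Type*} [CommMonoid S] [Monoid A] [MulAction S A]
    [IsScalarTower S A A] [SMulCommClass S A A] (q : S) :
    ∀ {n : ℕ} (f : Fin n → A), (List.ofFn fun i => q • f i).prod = q ^ n • (List.ofFn f).prod
  | 0, _ => by simp
  | n + 1, f => by
    rw [ofFn_succ, prod_cons, prod_ofFn_smul q, ofFn_succ, prod_cons,
      smul_mul_assoc, mul_smul_comm, smul_smul, pow_succ']

end List

theorem AlternatingMap.map_sum_smul_eq_det_smul {R M N ι : Type*} [CommRing R] [AddCommGroup M]
    [Module R M] [AddCommGroup N] [Module R N] [Fintype ι] [DecidableEq ι]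
    (f : M [⋀^ι]→ₗ[R] N) (B : Matrix ι ι R) (v : ι → M) :
    f (fun i => ∑ j, B i j • v j) = B.det • f v := by
  calc f (fun i => ∑ j, B i j • v j)
      = ∑ r : ι → ι, (∏ i, B i (r i)) • f (v ∘ r) :=
        (f.toMultilinearMap.map_sum fun i j => B i j • v j).trans <|
          Finset.sum_congr rfl fun r _ => f.toMultilinearMap.map_smul_univ _ (v ∘ r)
    _ = ∑ r : ι → ι with Function.Bijective r, (∏ i, B i (r i)) • f (v ∘ r) := by
        refine (Finset.sum_subset (Finset.filter_subset _ _) fun r _ hr => ?_).symm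
        rw [Finset.mem_filter_univ, ← Finite.injective_iff_bijective] at hr
        rw [f.map_eq_zero_of_not_injective _ fun h => hr (h.of_comp), smul_zero]
    _ = ∑ σ : Equiv.Perm ι, (∏ i, B i (σ i)) • f (v ∘ σ) :=
        Finset.sum_bij (fun r h => Equiv.ofBijective r (Finset.mem_filter.1 h).2)
          (fun _ _ => Finset.mem_univ _) (fun _ _ _ _ h => by injection h)
          (fun σ _ => ⟨σ, Finset.mem_filter.2 ⟨Finset.mem_univ _, σ.bijective⟩,
            Equiv.coe_fn_injective rfl⟩) fun _ _ => rfl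
    _ = B.det • f v := by
        simp only [f.map_perm, smul_smul, ← Finset.sum_smul, Units.smul_def,
          ← Int.cast_smul_eq_zsmul R]
        rw [← Matrix.det_transpose, Matrix.det_apply']
        exact congrArg (· • f v) (Finset.sum_congr rfl fun σ _ => mul_comm _ _)

namespace ExteriorAlgebra

variable {R M : Type*} [CommRing R] [AddCommGroup M] [Module R M]

theorem ι_mul_ι_anticomm (x y : M) : ι R x * ι R y = -(ι R y * ι R x) :=
  eq_neg_of_add_eq_zero_left (ι_add_mul_swap x y)

theorem commute_ι_mul_ι_ι (x y z : M) : Commute (ι R x * ι R y) (ι R z) := by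
  rw [commute_iff_eq, mul_assoc, ι_mul_ι_anticomm y z, mul_neg, ← mul_assoc,
    ι_mul_ι_anticomm x z, neg_mul, neg_neg, mul_assoc]

theorem commute_ι_mul_ι (x y z w : M) : Commute (ι R x * ι R y) (ι R z * ι R w) :=
  (commute_ι_mul_ι_ι z w x).symm.mul_left (commute_ι_mul_ι_ι z w y).symm

theorem ι_mul_ι_sq (x y : M) : (ι R x * ι R y) ^ 2 = 0 := by
  rw [sq, ← mul_assoc, (commute_ι_mul_ι_ι x y x).eq, ← mul_assoc, ι_sq_zero, zero_mul, zero_mul]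

theorem ι_mul_ιMulti {n : ℕ} (x : M) (v : Fin n → M) :
    ι R x * ιMulti R n v = (-1 : R) ^ n • (ιMulti R n v * ι R x) := by
  induction n with
  | zero => simp
  | succ n ih =>
    rw [ιMulti_succ_apply, ← mul_assoc, ι_mul_ι_anticomm, neg_mul, mul_assoc, ih, mul_smul_comm,
      ← mul_assoc, pow_succ, mul_neg_one, neg_smul]

theorem prod_ofFn_ι_mul_ι {n : ℕ} (a b : Fin n → M) :
    (List.ofFn fun i => ι R (a i) * ι R (b i)).prod =
      (-1 : R) ^ n.choose 2 • (ιMulti R n a * ιMulti R n b) := by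
  induction n with
  | zero => simp
  | succ n ih =>
    rw [List.ofFn_succ, List.prod_cons, ih, ιMulti_succ_apply, ιMulti_succ_apply, mul_smul_comm,
      mul_assoc, ← mul_assoc (ι R (b 0)), ι_mul_ιMulti, smul_mul_assoc, mul_smul_comm, smul_smul,
      Nat.choose_succ_succ, Nat.choose_one_right, pow_add, mul_comm ((-1 : R) ^ n)]
    simp only [mul_assoc, Matrix.vecTail]
    rfl

theorem commute_sum_smul_ι_mul_ι {n : ℕ} (B C : Matrix (Fin n) (Fin n) R) (a v b w : Fin n → M) :
    Commute (∑ i, ∑ j, B i j • (ι R (a i) * ι R (v j)))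
      (∑ i, ∑ j, C i j • (ι R (b i) * ι R (w j))) :=
  .sum_left _ _ _ fun _ _ => .sum_left _ _ _ fun _ _ => .sum_right _ _ _ fun _ _ =>
    .sum_right _ _ _ fun _ _ => ((commute_ι_mul_ι _ _ _ _).smul_left _).smul_right _

section

variable {n : ℕ} (B : Matrix (Fin n) (Fin n) R) (a v : Fin n → M)

theorem sum_smul_ι_mul_ι_eq_sum_ofFn :
    ∑ i, ∑ j, B i j • (ι R (a i) * ι R (v j)) =
      (List.ofFn fun i => ι R (a i) * ι R (∑ j, B i j • v j)).sum := by
  simp only [List.sum_ofFn, map_sum, map_smul, Finset.mul_sum, mul_smul_comm]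

theorem pairwise_commute_ofFn_ι_mul_ι (b : Fin n → M) :
    (List.ofFn fun i => ι R (a i) * ι R (b i)).Pairwise Commute :=
  List.pairwise_ofFn.2 fun _ _ _ => commute_ι_mul_ι _ _ _ _

theorem sum_smul_ι_mul_ι_pow_succ : (∑ i, ∑ j, B i j • (ι R (a i) * ι R (v j))) ^ (n + 1) = 0 := by
  have h := List.sum_pow_mul_length_succ_eq_zero (m := 1)
    (pairwise_commute_ofFn_ι_mul_ι (R := R) a fun i => ∑ j, B i j • v j)
    (List.forall_mem_ofFn_iff.2 fun _ => ι_mul_ι_sq _ _)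
  rwa [List.length_ofFn, one_mul, ← sum_smul_ι_mul_ι_eq_sum_ofFn] at h

theorem sum_smul_ι_mul_ι_pow : (∑ i, ∑ j, B i j • (ι R (a i) * ι R (v j))) ^ n =
    ((n.factorial : R) * (-1) ^ n.choose 2 * B.det) • (ιMulti R n a * ιMulti R n v) := by
  have h := List.factorial_pow_nsmul_sum_pow (m := 1)
    (pairwise_commute_ofFn_ι_mul_ι (R := R) a fun i => ∑ j, B i j • v j)
    (List.forall_mem_ofFn_iff.2 fun _ => ι_mul_ι_sq _ _)
  simp only [Nat.factorial_one, one_pow, one_smul, List.length_ofFn, one_mul, pow_one,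
    List.map_id'] at h
  rw [sum_smul_ι_mul_ι_eq_sum_ofFn, h, prod_ofFn_ι_mul_ι, AlternatingMap.map_sum_smul_eq_det_smul,
    mul_smul_comm, smul_smul, ← Nat.cast_smul_eq_nsmul R n.factorial, smul_smul, mul_assoc]

end

end ExteriorAlgebra

open ExteriorAlgebra

theorem fermionic_gaussian_torus_general (m g : ℕ)
    (A : Matrix (Fin m) (Fin m) ℚ) :
    (∑ k : Fin g, ∑ i : Fin m, ∑ j : Fin m,
        A i j • (zeta m g i (Sum.inl k) * zeta m g j (Sum.inr k))) ^ (m * g) =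
      ((m * g).factorial : ℚ) •
        (((-1 : ℚ) ^ (g * (m * (m - 1) / 2)) * A.det ^ g) •
          ((List.finRange g).map (fun k =>
            ((List.finRange m).map (fun i => zeta m g i (Sum.inl k))).prod *
              ((List.finRange m).map (fun i => zeta m g i (Sum.inr k))).prod)).prod) := by
  set e : Fin g ⊕ Fin g → Fin m → (Fin m × (Fin g ⊕ Fin g) → ℚ) :=
    fun k i => Pi.single (i, k) 1
  set Ω : Fin g → ExteriorAlgebra ℚ _ := fun k =>
    ∑ i, ∑ j, A i j • (ι ℚ (e (.inl k) i) * ι ℚ (e (.inr k) j))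
  set P : Fin g → ExteriorAlgebra ℚ _ := fun k =>
    ιMulti ℚ m (e (.inl k)) * ιMulti ℚ m (e (.inr k))
  have hP : ((List.finRange g).map fun k =>
      ((List.finRange m).map fun i => zeta m g i (Sum.inl k)).prod *
        ((List.finRange m).map fun i => zeta m g i (Sum.inr k)).prod).prod =
      (List.ofFn P).prod := by
    simp only [P, ιMulti_apply, List.ofFn_eq_map, zeta, e]
  have hmain := List.factorial_pow_nsmul_sum_pow (m := m) (l := List.ofFn Ω)
    (List.pairwise_ofFn.2 fun _ _ _ => commute_sum_smul_ι_mul_ι _ _ _ _ _ _)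
    (List.forall_mem_ofFn_iff.2 fun _ => sum_smul_ι_mul_ι_pow_succ _ _ _)
  simp only [List.sum_ofFn, List.length_ofFn, List.map_ofFn, Function.comp_def, Ω,
    sum_smul_ι_mul_ι_pow, List.prod_ofFn_smul, ← Nat.cast_smul_eq_nsmul ℚ, Nat.cast_pow] at hmain
  rw [hP]
  refine smul_right_injective _ (r := (m.factorial : ℚ) ^ g) (by positivity) (hmain.trans ?_)
  simp only [smul_smul]
  congr 1
  rw [← Nat.choose_two_right, mul_comm g, pow_mul]
  ring

/-- With `ω = Σ_{k=1}^{g} Σ_{i,j} Aᵢⱼ ζᵢᵏ ∧ ζⱼ^{k+g}` in the exterior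
algebra over `ℚ` on the `2mg` generators `ζᵢᵏ`, one has
`ω^{mg} = (mg)! * (-1)^{g·m(m-1)/2} * (det A)^g * Π_k (ζ₁ᵏ∧⋯∧ζₘᵏ∧ζ₁^{k+g}∧⋯∧ζₘ^{k+g})`. -/
theorem fermionic_gaussian_torus (m g : ℕ) (hm : 1 ≤ m) (hg : 1 ≤ g)
    (A : Matrix (Fin m) (Fin m) ℚ) :
    (∑ k : Fin g, ∑ i : Fin m, ∑ j : Fin m,
        A i j • (zeta m g i (Sum.inl k) * zeta m g j (Sum.inr k))) ^ (m * g) =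
      ((m * g).factorial : ℚ) •
        (((-1 : ℚ) ^ (g * (m * (m - 1) / 2)) * A.det ^ g) •
          ((List.finRange g).map (fun k =>
            ((List.finRange m).map (fun i => zeta m g i (Sum.inl k))).prod *
              ((List.finRange m).map (fun i => zeta m g i (Sum.inr k))).prod)).prod) :=
  fermionic_gaussian_torus_general m g A
end

section
/- Let n ≥ 2 and work in the field ℚ(X₁,…,Xₙ,t) of rational functions in n+1 indeterminates. For an integer vector ω = (ω₁,…,ωₙ) ∈ ℤⁿ and an integer g, define C(ω) = Π_{i ≠ j} (1 + (X_i − X_j)t)^{g−1+ω_j−ω_i} (a product over ordered pairs i ≠ j, with integer exponents interpreted in the field). Fix 1 ≤ p ≤ n−1 and let ω' be obtained from ω by adding 1 to ω_p and subtracting 1 from ω_{p+1}. Then C(ω') = V_p · C(ω), where V_p = Π_{q=1}^{n} [(1 + (X_q − X_p)t)(1 + (X_{p+1} − X_q)t)] / [(1 + (X_p − X_q)t)(1 + (X_q − X_{p+1})t)]. -/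
/-- The rational function field `ℚ(X₁,…,Xₙ,t)`: the fraction field of the polynomial
ring over `ℚ` in the variables indexed by `Option (Fin n)`, where `some i` is `Xᵢ`
and `none` is `t`. -/
noncomputable abbrev RatField (n : ℕ) : Type :=
  FractionRing (MvPolynomial (Option (Fin n)) ℚ)

/-- The variable `Xᵢ` in `ℚ(X₁,…,Xₙ,t)`. -/
noncomputable def XX {n : ℕ} (i : Fin n) : RatField n :=
  algebraMap (MvPolynomial (Option (Fin n)) ℚ) (RatField n) (MvPolynomial.X (some i))

/-- The variable `t` in `ℚ(X₁,…,Xₙ,t)`. -/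
noncomputable def tt (n : ℕ) : RatField n :=
  algebraMap (MvPolynomial (Option (Fin n)) ℚ) (RatField n) (MvPolynomial.X none)

/-- `C(ω) = Π_{i ≠ j} (1 + (Xᵢ - Xⱼ)t)^{g-1+ωⱼ-ωᵢ}`, a product over ordered pairs
`i ≠ j` with integer exponents taken in the field `ℚ(X₁,…,Xₙ,t)`. -/
noncomputable def Cprod (n : ℕ) (g : ℤ) (ω : Fin n → ℤ) : RatField n :=
  ∏ p ∈ Finset.univ.filter (fun p : Fin n × Fin n => p.1 ≠ p.2),
    (1 + (XX p.1 - XX p.2) * tt n) ^ (g - 1 + ω p.2 - ω p.1)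

/-- The basic factor `1 + (Xᵢ - Xⱼ)t`. -/
noncomputable def fF {n : ℕ} (i j : Fin n) : RatField n := 1 + (XX i - XX j) * tt n

lemma fF_ne_zero {n : ℕ} (i j : Fin n) : fF i j ≠ 0 := by
  have h : fF i j
      = algebraMap (MvPolynomial (Option (Fin n)) ℚ) (RatField n)
        (1 + (MvPolynomial.X (some i) - MvPolynomial.X (some j)) * MvPolynomial.X none) := by
    simp [fF, XX, tt, map_add, map_mul, map_sub, map_one]
  rw [h]
  intro hcon
  have hinj := IsFractionRing.injective (MvPolynomial (Option (Fin n)) ℚ) (RatField n)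
  have h0 : (1 + (MvPolynomial.X (some i) - MvPolynomial.X (some j)) * MvPolynomial.X none
      : MvPolynomial (Option (Fin n)) ℚ) = 0 := by
    apply hinj; rw [hcon, map_zero]
  have h1 := congrArg MvPolynomial.constantCoeff h0
  simp [MvPolynomial.constantCoeff_X] at h1

lemma fF_diag {n : ℕ} (i : Fin n) : fF i i = 1 := by simp [fF]

/-- Product of a double-if over all of a fintype. -/
lemma prod_double_ite {M : Type*} [CommMonoid M] {α : Type*} [Fintype α] [DecidableEq α]
    (A B : α → M) (p q : α) (hpq : p ≠ q) :
    (∏ j, (if j = p then A j else if j = q then B j else 1)) = A p * B q := by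
  have key : ∀ j, (if j = p then A j else if j = q then B j else 1)
      = (if j = p then A j else 1) * (if j = q then B j else 1) := by
    intro j
    by_cases h1 : j = p
    · subst h1; simp [hpq]
    · by_cases h2 : j = q <;> simp [h1, h2, Ne.symm hpq]
  simp_rw [key]
  rw [Finset.prod_mul_distrib, Finset.prod_ite_eq' Finset.univ p A,
    Finset.prod_ite_eq' Finset.univ q B]
  simp

/-- If `ω'` is obtained from `ω` by adding `1` to `ω_p` and subtracting `1`
from `ω_{p+1}` (indices `0`-based: `p` with `p + 1 < n`), then `C(ω') = V_p · C(ω)` where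
`V_p = Π_{q=1}^{n} [(1+(X_q-X_p)t)(1+(X_{p+1}-X_q)t)] / [(1+(X_p-X_q)t)(1+(X_q-X_{p+1})t)]`. -/
theorem Cprod_lattice_translate (n : ℕ) (hn : 2 ≤ n) (g : ℤ) (ω : Fin n → ℤ)
    (p : Fin n) (hp : (p : ℕ) + 1 < n) (ω' : Fin n → ℤ)
    (hω' : ω' = fun i =>
      if i = p then ω p + 1
      else if i = (⟨(p : ℕ) + 1, hp⟩ : Fin n) then ω i - 1
      else ω i) :
    Cprod n g ω' =
      (∏ q : Fin n,
        ((1 + (XX q - XX p) * tt n) * (1 + (XX (⟨(p : ℕ) + 1, hp⟩ : Fin n) - XX q) * tt n)) /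
          ((1 + (XX p - XX q) * tt n) *
            (1 + (XX q - XX (⟨(p : ℕ) + 1, hp⟩ : Fin n)) * tt n))) *
      Cprod n g ω := by
  set p' : Fin n := ⟨(p : ℕ) + 1, hp⟩ with hp'def
  have hpp' : p ≠ p' := by
    intro h
    have := congrArg Fin.val h
    simp [hp'def] at this
  -- the "difference" exponent function
  set d : Fin n → ℤ := fun i => if i = p then 1 else if i = p' then -1 else 0 with hd
  have hωd : ∀ i, ω' i = ω i + d i := by
    intro i
    rw [hω']
    simp only [hd]
    by_cases h1 : i = p
    · subst h1; simp
    · by_cases h2 : i = p'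
      · subst h2; simp [h1]; ring
      · simp [h1, h2]
  -- step 1 : C(ω') = (δ-product over off-diagonal pairs) * C(ω)
  have step1 : Cprod n g ω' =
      (∏ x ∈ Finset.univ.filter (fun x : Fin n × Fin n => x.1 ≠ x.2),
        fF x.1 x.2 ^ (d x.2 - d x.1)) * Cprod n g ω := by
    unfold Cprod
    rw [← Finset.prod_mul_distrib]
    apply Finset.prod_congr rfl
    intro x _
    have : (1 + (XX x.1 - XX x.2) * tt n) = fF x.1 x.2 := rfl
    rw [this, hωd x.1, hωd x.2,
      show g - 1 + (ω x.2 + d x.2) - (ω x.1 + d x.1)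
          = (d x.2 - d x.1) + (g - 1 + ω x.2 - ω x.1) from by ring,
      zpow_add₀ (fF_ne_zero x.1 x.2)]
  -- step 2 : extend the δ-product to all pairs (diagonal factors are 1)
  have step2 : (∏ x ∈ Finset.univ.filter (fun x : Fin n × Fin n => x.1 ≠ x.2),
        fF x.1 x.2 ^ (d x.2 - d x.1))
      = ∏ x : Fin n × Fin n, fF x.1 x.2 ^ (d x.2 - d x.1) := by
    rw [← Finset.prod_filter_mul_prod_filter_not Finset.univ
      (fun x : Fin n × Fin n => x.1 ≠ x.2) (fun x => fF x.1 x.2 ^ (d x.2 - d x.1))]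
    have h1 : (∏ x ∈ Finset.univ.filter (fun x : Fin n × Fin n => ¬ x.1 ≠ x.2),
        fF x.1 x.2 ^ (d x.2 - d x.1)) = 1 := by
      apply Finset.prod_eq_one
      intro x hx
      simp only [Finset.mem_filter, not_not] at hx
      rw [hx.2, fF_diag, one_zpow]
    rw [h1, mul_one]
  -- evaluate the full δ-product
  have hzpow : ∀ (z : RatField n) (j : Fin n), z ≠ 0 →
      z ^ d j = (if j = p then z else if j = p' then z⁻¹ else 1) := by
    intro z j hz
    simp only [hd]
    by_cases h1 : j = p
    · simp [h1]
    · by_cases h2 : j = p' <;> simp [h1, h2]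
  have stepA : (∏ x : Fin n × Fin n, fF x.1 x.2 ^ d x.2)
      = (∏ i, fF i p) * (∏ i, fF i p')⁻¹ := by
    rw [Fintype.prod_prod_type (fun x : Fin n × Fin n => fF x.1 x.2 ^ d x.2), Finset.prod_comm]
    have inner : ∀ j : Fin n, (∏ i, fF i j ^ d j)
        = (if j = p then ∏ i, fF i j else if j = p' then (∏ i, fF i j)⁻¹ else 1) := by
      intro j
      rw [Finset.prod_congr rfl (fun i _ => hzpow (fF i j) j (fF_ne_zero i j))]
      by_cases h1 : j = p
      · simp [h1]
      · by_cases h2 : j = p' <;> simp [h1, h2]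
    rw [Finset.prod_congr rfl (fun j _ => inner j)]
    exact prod_double_ite (fun j => ∏ i, fF i j) (fun j => (∏ i, fF i j)⁻¹) p p' hpp'
  have stepB : (∏ x : Fin n × Fin n, fF x.1 x.2 ^ d x.1)
      = (∏ j, fF p j) * (∏ j, fF p' j)⁻¹ := by
    rw [Fintype.prod_prod_type (fun x : Fin n × Fin n => fF x.1 x.2 ^ d x.1)]
    have inner : ∀ i : Fin n, (∏ j, fF i j ^ d i)
        = (if i = p then ∏ j, fF i j else if i = p' then (∏ j, fF i j)⁻¹ else 1) := by
      intro i
      rw [Finset.prod_congr rfl (fun j _ => hzpow (fF i j) i (fF_ne_zero i j))]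
      by_cases h1 : i = p
      · simp [h1]
      · by_cases h2 : i = p' <;> simp [h1, h2]
    rw [Finset.prod_congr rfl (fun i _ => inner i)]
    exact prod_double_ite (fun i => ∏ j, fF i j) (fun i => (∏ j, fF i j)⁻¹) p p' hpp'
  have step3 : (∏ x : Fin n × Fin n, fF x.1 x.2 ^ (d x.2 - d x.1))
      = ((∏ i, fF i p) * (∏ i, fF i p')⁻¹) / ((∏ j, fF p j) * (∏ j, fF p' j)⁻¹) := by
    have : ∀ x : Fin n × Fin n, fF x.1 x.2 ^ (d x.2 - d x.1)
        = fF x.1 x.2 ^ d x.2 / fF x.1 x.2 ^ d x.1 := by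
      intro x
      rw [zpow_sub₀ (fF_ne_zero x.1 x.2)]
    rw [Finset.prod_congr rfl (fun x _ => this x), Finset.prod_div_distrib, stepA, stepB]
  -- rewrite V_p in terms of fF-products
  have hV : (∏ q : Fin n,
        ((1 + (XX q - XX p) * tt n) * (1 + (XX p' - XX q) * tt n)) /
          ((1 + (XX p - XX q) * tt n) * (1 + (XX q - XX p') * tt n)))
      = ((∏ q, fF q p) * (∏ q, fF p' q)) / ((∏ q, fF p q) * (∏ q, fF q p')) := by
    rw [Finset.prod_div_distrib, Finset.prod_mul_distrib, Finset.prod_mul_distrib]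
    rfl
  -- finish
  rw [step1, step2, step3, hV]
  congr 1
  have h1 : (∏ i, fF i p) ≠ 0 := Finset.prod_ne_zero_iff.mpr fun i _ => fF_ne_zero i p
  have h2 : (∏ i, fF i p') ≠ 0 := Finset.prod_ne_zero_iff.mpr fun i _ => fF_ne_zero i p'
  have h3 : (∏ j, fF p j) ≠ 0 := Finset.prod_ne_zero_iff.mpr fun j _ => fF_ne_zero p j
  have h4 : (∏ j, fF p' j) ≠ 0 := Finset.prod_ne_zero_iff.mpr fun j _ => fF_ne_zero p' j
  field_simp
end

section
/- Fix λ ∈ ℚ and let K = ℚ(t). For integers k ≥ 0 and s ≥ 0, let F(k,s) ∈ K be the residue (coefficient of Y^{−1}) of the formal Laurent series N(Y)^k / (Y^{2s} D(Y)) over K, where N(Y) = (1 − λY²/2)(1 − Y²t²) + 4t and D(Y) = e^{Y/2}(1+Yt)² − e^{−Y/2}(1−Yt)². Then F(k,s) is either zero or a rational function of t of total degree at most k + s − 1. -/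
/-!
Measure elements of `ℚ(t)` by the square of the valuation at infinity, `x ↦ exp (2 deg x)`, so
that `Y` can be given weight `exp 1`, i.e. half a degree of `t`. The coefficient of `Yⁿ` in `N`
has degree at most `1 + n/2`. Write `D = Y g`: every coefficient of `D` has degree at most `2`
and the one of `Y²` vanishes, so `g(0) = 1 + 4t` has degree `1` and the coefficient of `Yⁿ` in
`g` has degree at most `1 + n/2` for `n ≥ 1`. The ultrametric inequality and the recursion for
the inverse then bound the coefficient of `Yⁿ` in `g⁻¹` by `n/2 - 1`, hence the one in
`N^k g⁻¹` by `k + n/2 - 1`; `F(k,s)` is its coefficient of `Y^{2s}`.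
-/

open PowerSeries

/-- `N(Y) = (1 - λY²/2)(1 - Y²t²) + 4t` as a formal power series in `Y` over `K = ℚ(t)`. -/
noncomputable def Nser (lam : ℚ) : PowerSeries (RatFunc ℚ) :=
  (1 - PowerSeries.C (R := RatFunc ℚ) (algebraMap ℚ (RatFunc ℚ) lam / 2) *
      PowerSeries.X ^ 2) *
    (1 - PowerSeries.C (R := RatFunc ℚ) (RatFunc.X ^ 2) * PowerSeries.X ^ 2) +
  PowerSeries.C (R := RatFunc ℚ) (4 * RatFunc.X)

/-- `D(Y) = e^{Y/2}(1+Yt)² - e^{-Y/2}(1-Yt)²` as a formal power series in `Y` over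
`K = ℚ(t)`. -/
noncomputable def DserK : PowerSeries (RatFunc ℚ) :=
  PowerSeries.rescale (algebraMap ℚ (RatFunc ℚ) (1 / 2))
      (PowerSeries.exp (RatFunc ℚ)) *
      (1 + PowerSeries.C (R := RatFunc ℚ) RatFunc.X * PowerSeries.X) ^ 2 -
    PowerSeries.rescale (algebraMap ℚ (RatFunc ℚ) (-(1 / 2)))
      (PowerSeries.exp (RatFunc ℚ)) *
      (1 - PowerSeries.C (R := RatFunc ℚ) RatFunc.X * PowerSeries.X) ^ 2

/-- `F(k,s)`: the residue (coefficient of `Y⁻¹`) of the formal Laurent series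
`N(Y)^k / (Y^{2s} D(Y))` over `K = ℚ(t)`. -/
noncomputable def Fres (lam : ℚ) (k : ℕ) (s : ℤ) : RatFunc ℚ :=
  ((((Nser lam ^ k : PowerSeries (RatFunc ℚ)) : LaurentSeries (RatFunc ℚ))) /
    (((PowerSeries.X : PowerSeries (RatFunc ℚ)) : LaurentSeries (RatFunc ℚ)) ^ (2 * s) *
      ((DserK : PowerSeries (RatFunc ℚ)) : LaurentSeries (RatFunc ℚ)))).coeff (-1)

open Finset
open scoped LaurentSeries WithZero

namespace PowerSeries

section CoeffsBounded

variable {R Γ₀ : Type*} [CommRing R] [LinearOrderedCommGroupWithZero Γ₀]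

def CoeffsBounded (v : Valuation R Γ₀) (c q : Γ₀) (f : R⟦X⟧) : Prop :=
  ∀ n, v (coeff n f) ≤ c * q ^ n

variable {v : Valuation R Γ₀} {c d q : Γ₀} {f g : R⟦X⟧}

theorem CoeffsBounded.add (hf : CoeffsBounded v c q f) (hg : CoeffsBounded v c q g) :
    CoeffsBounded v c q (f + g) :=
  fun n => by rw [map_add]; exact v.map_add_le (hf n) (hg n)

theorem CoeffsBounded.sub (hf : CoeffsBounded v c q f) (hg : CoeffsBounded v c q g) :
    CoeffsBounded v c q (f - g) :=
  fun n => by rw [map_sub]; exact v.map_sub_le (hf n) (hg n)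

theorem CoeffsBounded.mul (hf : CoeffsBounded v c q f) (hg : CoeffsBounded v d q g) :
    CoeffsBounded v (c * d) q (f * g) := fun n => by
  rw [coeff_mul]
  refine v.map_sum_le fun p hp => ?_
  rw [← mem_antidiagonal.mp hp, v.map_mul, pow_add, mul_mul_mul_comm]
  exact mul_le_mul' (hf p.1) (hg p.2)

theorem coeffsBounded_C_mul_X_pow {a : R} (m : ℕ) (ha : v a ≤ c * q ^ m) :
    CoeffsBounded v c q (C a * X ^ m) := fun n => by
  rw [coeff_C_mul_X_pow]
  split_ifs with h
  · rwa [h]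
  · simp

theorem coeffsBounded_C {a : R} (ha : v a ≤ c) : CoeffsBounded v c q (C a) := by
  simpa using coeffsBounded_C_mul_X_pow (q := q) 0 (by simpa using ha)

theorem coeffsBounded_one (hc : 1 ≤ c) : CoeffsBounded v c q 1 := by
  simpa using coeffsBounded_C (v := v) (q := q) (a := 1) (by simpa using hc)

theorem CoeffsBounded.pow (hf : CoeffsBounded v c q f) (k : ℕ) :
    CoeffsBounded v (c ^ k) q (f ^ k) := by
  induction k with
  | zero => simpa using coeffsBounded_one le_rfl
  | succ k ih => simpa [pow_succ] using ih.mul hf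

theorem coeffsBounded_inv {K : Type*} [Field K] {v : Valuation K Γ₀} {f : K⟦X⟧}
    (h0 : constantCoeff f ≠ 0) (hf : ∀ n, 1 ≤ n → v (coeff n f) ≤ v (constantCoeff f) * q ^ n) :
    CoeffsBounded v (v (constantCoeff f))⁻¹ q f⁻¹ := by
  intro n
  induction n using Nat.strong_induction_on with
  | _ n ih =>
    rw [coeff_inv]
    split_ifs with hn
    · simp [hn]
    have hsum : v (∑ p ∈ antidiagonal n,
        if p.2 < n then coeff p.1 f * coeff p.2 f⁻¹ else 0) ≤ q ^ n := by
      refine v.map_sum_le fun p hp => ?_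
      have hpn := mem_antidiagonal.mp hp
      split_ifs with hlt
      · rw [v.map_mul, ← hpn, pow_add]
        calc v (coeff p.1 f) * v (coeff p.2 f⁻¹)
            ≤ (v (constantCoeff f) * q ^ p.1) * ((v (constantCoeff f))⁻¹ * q ^ p.2) := by
              gcongr
              · exact hf _ (by omega)
              · exact ih _ hlt
          _ = q ^ p.1 * q ^ p.2 := by
              rw [mul_mul_mul_comm, mul_inv_cancel₀ ((v.ne_zero_iff).mpr h0), one_mul]
      · simp
    rw [v.map_mul, v.map_neg, map_inv₀]
    gcongr

end CoeffsBounded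

end PowerSeries

theorem LaurentSeries.coeff_neg_one_div_X_zpow_mul_X_mul {K : Type*} [Field K] (f h : K⟦X⟧)
    (m : ℕ) (hh : constantCoeff h ≠ 0) :
    ((f : K⸨X⸩) / (((X : K⟦X⟧) : K⸨X⸩) ^ (m : ℤ) * ((X * h : K⟦X⟧) : K⸨X⸩))).coeff (-1) =
      coeff m (f * h⁻¹) := by
  have hf : (f : K⸨X⸩) = ((f * h⁻¹ : K⟦X⟧) : K⸨X⸩) * (h : K⸨X⸩) := by
    rw [← PowerSeries.coe_mul, mul_assoc, PowerSeries.inv_mul_cancel _ hh, mul_one]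
  have hh' : (h : K⸨X⸩) ≠ 0 := by
    rw [Ne, ← map_zero (HahnSeries.ofPowerSeries ℤ K), HahnSeries.ofPowerSeries_injective.eq_iff]
    rintro rfl
    simp at hh
  have hden : ((X : K⟦X⟧) : K⸨X⸩) ^ (m : ℤ) * ((X * h : K⟦X⟧) : K⸨X⸩) =
      HahnSeries.single ((m : ℤ) + 1) 1 * (h : K⸨X⸩) := by
    rw [PowerSeries.coe_mul, coe_X, zpow_natCast, HahnSeries.single_pow, ← mul_assoc,
      HahnSeries.single_mul_single]
    simp
  rw [hden, hf, mul_div_mul_right _ _ hh', div_eq_mul_inv, HahnSeries.inv_single,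
    show (-1 : ℤ) = m + -((m : ℤ) + 1) by ring, HahnSeries.coeff_mul_single_add,
    LaurentSeries.coeff_coe_powerSeries]
  simp

namespace RatFunc

variable (F : Type*) [Field F] [DecidableEq (RatFunc F)]

/-- Squaring the valuation at infinity lets the power series variable carry half a degree. -/
noncomputable def inftyValuationSq : Valuation (RatFunc F) ℤᵐ⁰ :=
  (inftyValuation F).map (powMonoidWithZeroHom two_ne_zero) fun _ _ h => pow_le_pow_left' h 2

variable {F}

theorem inftyValuationSq_apply (x : RatFunc F) :
    inftyValuationSq F x = inftyValuation F x ^ 2 := rfl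

theorem inftyValuationSq_X : inftyValuationSq F X = WithZero.exp 2 := by
  rw [inftyValuationSq_apply, inftyValuation.X, ← WithZero.exp_nsmul]
  norm_num

theorem inftyValuationSq_C {a : F} (ha : a ≠ 0) : inftyValuationSq F (C a) = 1 := by
  rw [inftyValuationSq_apply, inftyValuation.C F ha, one_pow]

theorem inftyValuationSq_C_le_one (a : F) : inftyValuationSq F (C a) ≤ 1 := by
  rcases eq_or_ne a 0 with rfl | ha
  · simp
  · exact (inftyValuationSq_C ha).le

theorem eq_zero_or_intDegree_le_of_inftyValuationSq_le {x : RatFunc F} {d : ℤ}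
    (h : inftyValuationSq F x ≤ WithZero.exp (2 * d)) : x = 0 ∨ x.intDegree ≤ d := by
  refine or_iff_not_imp_left.mpr fun hx => ?_
  rwa [inftyValuationSq_apply, inftyValuation_apply, inftyValuation_of_nonzero (F := F) hx,
    ← WithZero.exp_nsmul, WithZero.exp_le_exp, nsmul_eq_mul, Nat.cast_ofNat,
    mul_le_mul_iff_right₀ two_pos] at h

-- `algebraMap ℚ (RatFunc ℚ)` is `DivisionRing.toRatAlgebra`, not the algebra structure for which
-- `inftyValuation` is known to be trivial on constants.
theorem algebraMap_rat_eq_C (a : ℚ) : algebraMap ℚ (RatFunc ℚ) a = C a :=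
  (eq_ratCast _ a).trans (map_ratCast (C : ℚ →+* RatFunc ℚ) a).symm

end RatFunc

section ResidueBound

open scoped Classical

local notation "w" => RatFunc.inftyValuationSq ℚ

theorem inftyValuationSq_four_mul_X : w (4 * RatFunc.X) = WithZero.exp 2 := by
  rw [map_mul, ← map_ofNat (RatFunc.C : ℚ →+* RatFunc ℚ) 4,
    RatFunc.inftyValuationSq_C (by norm_num), RatFunc.inftyValuationSq_X, one_mul]

theorem inftyValuationSq_one_add_four_mul_X : w (1 + 4 * RatFunc.X) = WithZero.exp 2 := by
  rw [Valuation.map_add_eq_of_lt_right _ (by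
      rw [inftyValuationSq_four_mul_X, map_one, ← WithZero.exp_zero, WithZero.exp_lt_exp]
      norm_num),
    inftyValuationSq_four_mul_X]

theorem coeffsBounded_Nser (lam : ℚ) :
    CoeffsBounded w (WithZero.exp 2) (WithZero.exp 1) (Nser lam) := by
  have hlam : w (algebraMap ℚ (RatFunc ℚ) lam / 2) ≤ 1 := by
    rw [← map_ofNat (algebraMap ℚ (RatFunc ℚ)) 2, ← map_div₀, RatFunc.algebraMap_rat_eq_C]
    exact RatFunc.inftyValuationSq_C_le_one _
  have hleft : CoeffsBounded w 1 (WithZero.exp 1)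
      (1 - C (algebraMap ℚ (RatFunc ℚ) lam / 2) * X ^ 2) :=
    (coeffsBounded_one le_rfl).sub (coeffsBounded_C_mul_X_pow 2 (hlam.trans (by
      rw [one_mul, ← WithZero.exp_nsmul, ← WithZero.exp_zero, WithZero.exp_le_exp]; norm_num)))
  have hright :
      CoeffsBounded w (WithZero.exp 2) (WithZero.exp 1) (1 - C (RatFunc.X ^ 2) * X ^ 2) :=
    (coeffsBounded_one (WithZero.exp_le_exp.mpr (by norm_num : (0 : ℤ) ≤ 2))).sub
      (coeffsBounded_C_mul_X_pow 2 (by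
        rw [map_pow, RatFunc.inftyValuationSq_X]
        norm_num [← WithZero.exp_nsmul, ← WithZero.exp_add]))
  have hconst : CoeffsBounded w (WithZero.exp 2) (WithZero.exp 1) (C (4 * RatFunc.X)) :=
    coeffsBounded_C inftyValuationSq_four_mul_X.le
  rw [Nser, ← one_mul (WithZero.exp 2)]
  exact (hleft.mul hright).add hconst

theorem coeffsBounded_rescale_exp (a : ℚ) :
    CoeffsBounded w 1 1 (rescale (algebraMap ℚ (RatFunc ℚ) a) (exp (RatFunc ℚ))) := fun n => by
  rw [coeff_rescale, coeff_exp, ← map_pow, ← map_mul, RatFunc.algebraMap_rat_eq_C, one_pow,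
    one_mul]
  exact RatFunc.inftyValuationSq_C_le_one _

theorem coeffsBounded_DserK : CoeffsBounded w (WithZero.exp 4) 1 DserK := by
  have hX : CoeffsBounded w (WithZero.exp 2) 1 (C RatFunc.X * X) := by
    rw [← pow_one X]
    exact coeffsBounded_C_mul_X_pow 1 (by rw [RatFunc.inftyValuationSq_X, one_pow, mul_one])
  have hone : CoeffsBounded w (WithZero.exp 2) 1 1 :=
    coeffsBounded_one (WithZero.exp_le_exp.mpr (by norm_num : (0 : ℤ) ≤ 2))
  have hplus := (coeffsBounded_rescale_exp (1 / 2)).mul ((hone.add hX).pow 2)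
  have hminus := (coeffsBounded_rescale_exp (-(1 / 2))).mul ((hone.sub hX).pow 2)
  have hc : (WithZero.exp 4 : ℤᵐ⁰) = 1 * WithZero.exp 2 ^ 2 := by
    rw [one_mul, ← WithZero.exp_nsmul]; norm_num
  rw [DserK, hc]
  exact hplus.sub hminus

theorem constantCoeff_DserK : constantCoeff DserK = 0 := by
  rw [← coeff_zero_eq_constantCoeff_apply]
  simp only [DserK, sq, mul_add, mul_sub, mul_one, ← mul_assoc, map_add, map_sub,
    coeff_zero_mul_X, coeff_rescale, coeff_exp]
  norm_num

theorem coeff_one_DserK : coeff 1 DserK = 1 + 4 * RatFunc.X := by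
  simp only [DserK, sq, mul_add, mul_sub, mul_one, ← mul_assoc, map_add, map_sub,
    coeff_succ_mul_X, coeff_mul_C, coeff_zero_mul_X, coeff_rescale, coeff_exp]
  norm_num
  ring

theorem coeff_two_DserK : coeff 2 DserK = 0 := by
  simp only [DserK, sq, mul_add, mul_sub, mul_one, ← mul_assoc, map_add, map_sub,
    coeff_succ_mul_X, coeff_mul_C, coeff_rescale, coeff_exp]
  norm_num
  ring

theorem coeff_of_DserK_eq_X_mul {g : (RatFunc ℚ)⟦X⟧} (hg : DserK = X * g) (n : ℕ) :
    coeff n g = coeff (n + 1) DserK := by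
  rw [hg, coeff_succ_X_mul]

theorem constantCoeff_of_DserK_eq_X_mul {g : (RatFunc ℚ)⟦X⟧} (hg : DserK = X * g) :
    constantCoeff g = 1 + 4 * RatFunc.X := by
  rw [← coeff_zero_eq_constantCoeff_apply, coeff_of_DserK_eq_X_mul hg, coeff_one_DserK]

theorem constantCoeff_ne_zero_of_DserK_eq_X_mul {g : (RatFunc ℚ)⟦X⟧} (hg : DserK = X * g) :
    constantCoeff g ≠ 0 := by
  rw [← (RatFunc.inftyValuationSq ℚ).ne_zero_iff, constantCoeff_of_DserK_eq_X_mul hg,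
    inftyValuationSq_one_add_four_mul_X]
  exact WithZero.exp_ne_zero

theorem coeffsBounded_inv_of_DserK_eq_X_mul {g : (RatFunc ℚ)⟦X⟧} (hg : DserK = X * g) :
    CoeffsBounded w (WithZero.exp 2)⁻¹ (WithZero.exp 1) g⁻¹ := by
  have hw : w (constantCoeff g) = WithZero.exp 2 := by
    rw [constantCoeff_of_DserK_eq_X_mul hg, inftyValuationSq_one_add_four_mul_X]
  rw [← hw]
  refine coeffsBounded_inv (constantCoeff_ne_zero_of_DserK_eq_X_mul hg) fun n hn => ?_
  rw [hw, coeff_of_DserK_eq_X_mul hg]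
  rcases hn.eq_or_lt with rfl | hn
  · rw [coeff_two_DserK, map_zero]
    exact zero_le
  · refine (coeffsBounded_DserK (n + 1)).trans ?_
    rw [one_pow, mul_one, ← WithZero.exp_nsmul, ← WithZero.exp_add, WithZero.exp_le_exp,
      nsmul_eq_mul, mul_one]
    omega

theorem Fres_eq_coeff_of_DserK_eq_X_mul {g : (RatFunc ℚ)⟦X⟧} (hg : DserK = X * g) (lam : ℚ)
    (k s : ℕ) : Fres lam k s = coeff (2 * s) (Nser lam ^ k * g⁻¹) := by
  rw [Fres, hg, show 2 * (s : ℤ) = ((2 * s : ℕ) : ℤ) by push_cast; ring]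
  exact LaurentSeries.coeff_neg_one_div_X_zpow_mul_X_mul _ _ _
    (constantCoeff_ne_zero_of_DserK_eq_X_mul hg)

end ResidueBound

/-- For all `k, s ≥ 0`, the residue `F(k,s)` of `N(Y)^k/(Y^{2s}D(Y))` is
either zero or a rational function of `t` of total degree (numerator degree minus
denominator degree) at most `k + s - 1`. -/
theorem Fres_degree_bound (lam : ℚ) (k s : ℕ) :
    Fres lam k s = 0 ∨ (Fres lam k s).intDegree ≤ (k : ℤ) + (s : ℤ) - 1 := by
  classical
  obtain ⟨g, hg⟩ := X_dvd_iff.mpr constantCoeff_DserK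
  refine RatFunc.eq_zero_or_intDegree_le_of_inftyValuationSq_le ?_
  have hbound := ((coeffsBounded_Nser lam).pow k).mul (coeffsBounded_inv_of_DserK_eq_X_mul hg)
  rw [Fres_eq_coeff_of_DserK_eq_X_mul hg]
  refine (hbound (2 * s)).trans_eq ?_
  simp only [← WithZero.exp_nsmul, ← WithZero.exp_neg, ← WithZero.exp_add]
  congr 1
  ring
end

section
/- Let K = ℚ(t) and for integers s ≥ 0 let F(0,s) ∈ K be the residue (coefficient of Y^{−1}) of 1/(Y^{2s} D(Y)), where D(Y) = e^{Y/2}(1+Yt)² − e^{−Y/2}(1−Yt)². Then F(0,s) − (−1)^s·2^{−2s−2}·t^{s−1} is either zero or a rational function of t of total degree strictly less than s − 1. -/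
open PowerSeries

/-!
Write `D = Y·U` (`U = DserK.divX`). Then `F(0,s)` is the coefficient `w_{2s}` of `Y^{2s}` in
`1/U`, and degrees in `t` are measured by the valuation at infinity `ν` of `ℚ(t)`. Every
coefficient of `U` has degree at most `2`, while `u₀ = 1 + 4t`, `u₁ = 0` and
`u₂ = t² + O(t)`. The recursion `(1 + 4t) w_{n+1} = -∑_{i+j=n} u_{i+1} w_j` therefore gives
`deg w_n ≤ ⌊n/2⌋ - 1`, and in it every term but `u₂ w_{2s}` is `O(t^s)`, so
`w_{2s+2} = -(t/4) w_{2s} + O(t^{s-1})`. This recursion is solved exactly by the leading term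
`(-1)^s 4^{-s-1} t^{s-1}`.
-/

open WithZero Finset.HasAntidiagonal
open scoped Classical

noncomputable section

local notation "K" => RatFunc ℚ
local notation "t" => (RatFunc.X : RatFunc ℚ)
local notation "ν" => RatFunc.inftyValuation ℚ
local notation "E₊" => rescale (algebraMap ℚ K (1 / 2)) (exp K)
local notation "E₋" => rescale (algebraMap ℚ K (-(1 / 2))) (exp K)

lemma PowerSeries.constantCoeff_rescale {R : Type*} [CommSemiring R] (a : R) (f : R⟦X⟧) :
    constantCoeff (rescale a f) = constantCoeff f := by
  rw [← coeff_zero_eq_constantCoeff_apply, coeff_rescale, pow_zero, one_mul,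
    coeff_zero_eq_constantCoeff_apply]

lemma PowerSeries.constantCoeff_mul_coeff_inv_succ {F : Type*} [Field F] {φ : F⟦X⟧}
    (hφ : constantCoeff φ ≠ 0) (n : ℕ) :
    constantCoeff φ * coeff (n + 1) φ⁻¹ =
      -∑ p ∈ antidiagonal n, coeff (p.1 + 1) φ * coeff p.2 φ⁻¹ := by
  have h := congrArg (coeff (n + 1)) (PowerSeries.mul_inv_cancel φ hφ)
  rw [coeff_mul, Finset.Nat.sum_antidiagonal_succ, coeff_one, if_neg n.succ_ne_zero,
    coeff_zero_eq_constantCoeff_apply] at h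
  linear_combination h

lemma LaurentSeries.coe_inv_of_constantCoeff_ne_zero {F : Type*} [Field F] {φ : F⟦X⟧}
    (hφ : constantCoeff φ ≠ 0) :
    ((φ⁻¹ : F⟦X⟧) : LaurentSeries F) = (φ : LaurentSeries F)⁻¹ := by
  refine (inv_eq_of_mul_eq_one_right ?_).symm
  rw [← PowerSeries.coe_mul, PowerSeries.mul_inv_cancel φ hφ, PowerSeries.coe_one]

lemma LaurentSeries.coeff_neg_one_inv_X_zpow_mul {F : Type*} [Field F] {φ : F⟦X⟧}
    (hφ : constantCoeff φ ≠ 0) (n : ℕ) :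
    (((X : F⟦X⟧) : LaurentSeries F) ^ (n : ℤ) *
        ((X * φ : F⟦X⟧) : LaurentSeries F))⁻¹.coeff (-1) = coeff n φ⁻¹ := by
  have hX : ((X : F⟦X⟧) : LaurentSeries F) ≠ 0 := by simp
  rw [PowerSeries.coe_mul, ← mul_assoc, ← zpow_add_one₀ hX, mul_inv,
    ← coe_inv_of_constantCoeff_ne_zero hφ, coe_X, ← zpow_neg, ← RatFunc.single_zpow,
    show (-1 : ℤ) = n + -(n + 1) by ring, HahnSeries.coeff_single_mul_add, one_mul,
    coeff_coe_powerSeries]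

lemma RatFunc.eq_zero_or_intDegree_lt_of_inftyValuation_lt {F : Type*} [Field F]
    [DecidableEq (RatFunc F)] {f : RatFunc F} {d : ℤ} (h : inftyValuation F f < exp d) :
    f = 0 ∨ f.intDegree < d := by
  refine or_iff_not_imp_left.2 fun hf => ?_
  rwa [inftyValuation_apply, inftyValuation_of_nonzero F hf, exp_lt_exp] at h

lemma Valuation.map_mul_le_exp_add {R : Type*} [Ring R] {v : Valuation R ℤᵐ⁰} {x y : R}
    {a b : ℤ} (hx : v x ≤ exp a) (hy : v y ≤ exp b) : v (x * y) ≤ exp (a + b) := by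
  rw [map_mul, exp_add]
  exact mul_le_mul' hx hy

lemma valuation_algebraMap_le_one (q : ℚ) : ν (algebraMap ℚ K q) ≤ 1 := by
  rw [RingHom.congr_fun (Subsingleton.elim (algebraMap ℚ K) RatFunc.C) q]
  rcases eq_or_ne q 0 with rfl | hq
  · simp
  · exact (RatFunc.inftyValuation.C ℚ hq).le

@[simp]
lemma valuation_ofNat (n : ℕ) [n.AtLeastTwo] : ν (no_index (OfNat.ofNat n : K)) = 1 := by
  rw [← map_ofNat RatFunc.C]
  exact RatFunc.inftyValuation.C ℚ (by norm_num)

lemma valuation_coeff_rescale_exp_le_one (q : ℚ) (m : ℕ) :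
    ν (coeff m (rescale (algebraMap ℚ K q) (exp K))) ≤ 1 := by
  rw [coeff_rescale, coeff_exp, ← map_pow, ← map_mul]
  exact valuation_algebraMap_le_one _

lemma valuation_one_add_four_mul_X : ν (1 + 4 * t) = exp 1 := by
  rw [add_comm, Valuation.map_add_eq_of_lt_left]
  · simp
  · simpa using exp_lt_exp.2 (zero_lt_one (α := ℤ))

lemma one_add_four_mul_X_ne_zero : (1 + 4 * t : K) ≠ 0 := by
  intro h
  have h1 := valuation_one_add_four_mul_X
  rw [h, map_zero] at h1
  exact exp_ne_zero h1.symm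

lemma valuation_le_of_one_add_four_mul_X_mul_le {x : K} {d : ℤ}
    (h : ν ((1 + 4 * t) * x) ≤ exp (d + 1)) : ν x ≤ exp d := by
  rwa [map_mul, valuation_one_add_four_mul_X, exp_add, mul_comm (exp d),
    mul_le_mul_iff_right₀ exp_pos] at h

def leadTerm (s : ℕ) : K := (-1) ^ s * 2 ^ (-(2 * (s : ℤ)) - 2) * t ^ ((s : ℤ) - 1)

lemma leadTerm_succ (s : ℕ) : leadTerm (s + 1) = -(t / 4) * leadTerm s := by
  simp only [leadTerm]
  push_cast
  rw [show -(2 * ((s : ℤ) + 1)) - 2 = (-(2 * (s : ℤ)) - 2) - 2 by ring, zpow_sub₀ two_ne_zero,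
    show (s : ℤ) + 1 - 1 = ((s : ℤ) - 1) + 1 by ring, zpow_add_one₀ RatFunc.X_ne_zero]
  ring

lemma leadTerm_zero : leadTerm 0 = (4 * t)⁻¹ := by
  norm_num [leadTerm, mul_comm]

lemma valuation_leadTerm (s : ℕ) : ν (leadTerm s) = exp ((s : ℤ) - 1) := by
  simp [leadTerm]

namespace DserK

lemma eq_odd_add_X_mul : DserK =
    (E₊ - E₋) + X * (C (2 * t) * (E₊ + E₋) + X * (C (t ^ 2) * (E₊ - E₋))) := by
  rw [DserK]
  simp only [map_mul, map_pow, map_ofNat]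
  ring

lemma coeff_add_two (n : ℕ) : coeff (n + 2) DserK =
    (coeff (n + 2) E₊ - coeff (n + 2) E₋) + 2 * t * (coeff (n + 1) E₊ + coeff (n + 1) E₋) +
      t ^ 2 * (coeff n E₊ - coeff n E₋) := by
  simp only [eq_odd_add_X_mul, map_add, map_sub, coeff_succ_X_mul, coeff_C_mul, add_assoc]

lemma coeff_zero : coeff 0 DserK = 0 := by
  simp [eq_odd_add_X_mul, constantCoeff_rescale]

lemma coeff_one : coeff 1 DserK = 1 + 4 * t := by
  norm_num [eq_odd_add_X_mul, constantCoeff_rescale, coeff_rescale, mul_right_comm _ t]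

lemma coeff_two : coeff 2 DserK = 0 := by
  simp [coeff_add_two 0, coeff_rescale]

lemma valuation_coeff_sub_le (m : ℕ) : ν (coeff m E₊ - coeff m E₋) ≤ exp 0 :=
  Valuation.map_sub_le _ (valuation_coeff_rescale_exp_le_one _ _)
    (valuation_coeff_rescale_exp_le_one _ _)

lemma valuation_coeff_add_le (m : ℕ) : ν (coeff m E₊ + coeff m E₋) ≤ exp 0 :=
  Valuation.map_add_le _ (valuation_coeff_rescale_exp_le_one _ _)
    (valuation_coeff_rescale_exp_le_one _ _)

lemma valuation_coeff_add_two_le (n : ℕ) : ν (coeff (n + 2) DserK) ≤ exp 2 := by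
  rw [coeff_add_two]
  refine Valuation.map_add_le _ (Valuation.map_add_le _ ?_ ?_) ?_
  · exact (valuation_coeff_sub_le _).trans (exp_le_exp.2 (by norm_num))
  · exact (Valuation.map_mul_le_exp_add (by simp : ν (2 * t) ≤ exp 1)
      (valuation_coeff_add_le _)).trans (exp_le_exp.2 (by norm_num))
  · exact Valuation.map_mul_le_exp_add (by simp : ν (t ^ 2) ≤ exp 2) (valuation_coeff_sub_le _)

lemma valuation_coeff_three_sub_le : ν (coeff 3 DserK - t ^ 2) ≤ exp 1 := by
  have h1 : coeff 1 E₊ - coeff 1 E₋ = 1 := by norm_num [coeff_rescale]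
  rw [coeff_add_two 1, h1, mul_one, add_sub_cancel_right]
  refine Valuation.map_add_le _ ?_ ?_
  · exact (valuation_coeff_sub_le _).trans (exp_le_exp.2 (by norm_num))
  · exact Valuation.map_mul_le_exp_add (by simp : ν (2 * t) ≤ exp 1) (valuation_coeff_add_le _)

def divX : K⟦X⟧ := mk fun n => coeff (n + 1) DserK

lemma eq_X_mul_divX : DserK = X * divX := by
  have h := sub_const_eq_X_mul_shift DserK
  rwa [← coeff_zero_eq_constantCoeff_apply, coeff_zero, map_zero, sub_zero] at h

lemma constantCoeff_divX : constantCoeff divX = 1 + 4 * t := by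
  rw [divX, ← coeff_zero_eq_constantCoeff_apply, coeff_mk, coeff_one]

lemma constantCoeff_divX_ne_zero : constantCoeff divX ≠ 0 :=
  constantCoeff_divX ▸ one_add_four_mul_X_ne_zero

lemma Fres_zero_eq_coeff_inv_divX (lam : ℚ) (s : ℕ) :
    Fres lam 0 s = coeff (2 * s) divX⁻¹ := by
  rw [Fres, pow_zero, PowerSeries.coe_one, one_div, eq_X_mul_divX,
    show 2 * (s : ℤ) = ((2 * s : ℕ) : ℤ) by push_cast; ring,
    LaurentSeries.coeff_neg_one_inv_X_zpow_mul constantCoeff_divX_ne_zero]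

lemma one_add_four_mul_X_mul_coeff_inv_divX_succ (n : ℕ) :
    (1 + 4 * t) * coeff (n + 1) divX⁻¹ =
      -∑ p ∈ antidiagonal n, coeff (p.1 + 2) DserK * coeff p.2 divX⁻¹ := by
  rw [← constantCoeff_divX, constantCoeff_mul_coeff_inv_succ constantCoeff_divX_ne_zero]
  simp only [divX, coeff_mk]

lemma coeff_zero_inv_divX : coeff 0 divX⁻¹ = (1 + 4 * t)⁻¹ := by
  rw [coeff_zero_eq_constantCoeff_apply, constantCoeff_inv, constantCoeff_divX]

lemma valuation_coeff_inv_divX_le (n : ℕ) :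
    ν (coeff n divX⁻¹) ≤ exp ((n / 2 : ℕ) - 1 : ℤ) := by
  induction n using Nat.strong_induction_on with
  | _ n ih =>
  cases n with
  | zero =>
    rw [coeff_zero_inv_divX, map_inv₀, valuation_one_add_four_mul_X]
    simp
  | succ m =>
    apply valuation_le_of_one_add_four_mul_X_mul_le
    rw [one_add_four_mul_X_mul_coeff_inv_divX_succ, Valuation.map_neg]
    refine Valuation.map_sum_le _ fun p hp => ?_
    rw [mem_antidiagonal] at hp
    rcases p with ⟨_ | i, j⟩
    · simp [coeff_two]
    · exact (Valuation.map_mul_le_exp_add (valuation_coeff_add_two_le _) (ih j (by omega))).trans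
        (exp_le_exp.2 (by omega))

lemma coeff_zero_inv_divX_sub_leadTerm_zero :
    coeff 0 divX⁻¹ - leadTerm 0 = -(4 * t * (1 + 4 * t))⁻¹ := by
  have : 1 + 4 * t ≠ 0 := one_add_four_mul_X_ne_zero
  have : t ≠ 0 := RatFunc.X_ne_zero
  rw [coeff_zero_inv_divX, leadTerm_zero]
  field_simp
  ring

lemma one_add_four_mul_X_mul_coeff_inv_divX_sub_leadTerm_succ (s : ℕ) :
    (1 + 4 * t) * (coeff (2 * (s + 1)) divX⁻¹ - leadTerm (s + 1)) =
      -((coeff 3 DserK - t ^ 2) * coeff (2 * s) divX⁻¹) -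
        t ^ 2 * (coeff (2 * s) divX⁻¹ - leadTerm s) -
        ∑ p ∈ (antidiagonal (2 * s + 1)).erase (1, 2 * s),
          coeff (p.1 + 2) DserK * coeff p.2 divX⁻¹ -
        leadTerm (s + 1) := by
  have hmem : (1, 2 * s) ∈ antidiagonal (2 * s + 1) := mem_antidiagonal.2 (by ring)
  have hrec := one_add_four_mul_X_mul_coeff_inv_divX_succ (2 * s + 1)
  rw [← Finset.add_sum_erase _ _ hmem] at hrec
  rw [leadTerm_succ, show 2 * (s + 1) = 2 * s + 1 + 1 by ring]
  linear_combination hrec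

lemma valuation_coeff_inv_divX_sub_leadTerm_le (s : ℕ) :
    ν (coeff (2 * s) divX⁻¹ - leadTerm s) ≤ exp ((s : ℤ) - 2) := by
  induction s with
  | zero =>
    simp only [mul_zero, coeff_zero_inv_divX_sub_leadTerm_zero, Valuation.map_neg, map_inv₀,
      map_mul, valuation_ofNat, RatFunc.inftyValuation.X, valuation_one_add_four_mul_X]
    rw [one_mul, ← exp_add, ← exp_neg]
    exact exp_le_exp.2 (by omega)
  | succ s ih =>
    apply valuation_le_of_one_add_four_mul_X_mul_le
    rw [one_add_four_mul_X_mul_coeff_inv_divX_sub_leadTerm_succ,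
      show ((s + 1 : ℕ) : ℤ) - 2 + 1 = s by push_cast; ring]
    refine Valuation.map_sub_le _ (Valuation.map_sub_le _ (Valuation.map_sub_le _ ?_ ?_) ?_) ?_
    · rw [Valuation.map_neg]
      exact (Valuation.map_mul_le_exp_add valuation_coeff_three_sub_le
        (valuation_coeff_inv_divX_le _)).trans (exp_le_exp.2 (by omega))
    · exact (Valuation.map_mul_le_exp_add (by simp : ν (t ^ 2) ≤ exp 2) ih).trans
        (exp_le_exp.2 (by omega))
    · refine Valuation.map_sum_le _ fun p hp => ?_
      obtain ⟨hne, hp⟩ := Finset.mem_erase.1 hp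
      rw [mem_antidiagonal] at hp
      rcases p with ⟨_ | _ | i, j⟩
      · simp [coeff_two]
      · exact (hne (by simp only [Prod.mk.injEq, zero_add, true_and]; omega)).elim
      · exact (Valuation.map_mul_le_exp_add (valuation_coeff_add_two_le _)
          (valuation_coeff_inv_divX_le j)).trans (exp_le_exp.2 (by omega))
    · exact (valuation_leadTerm _).le.trans (exp_le_exp.2 (by omega))

end DserK

end

/-- For `s ≥ 0`, the residue `F(0,s)` of `1/(Y^{2s}D(Y))` satisfies:
`F(0,s) - (-1)^s·2^{-2s-2}·t^{s-1}` is either zero or a rational function of `t` of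
total degree strictly less than `s - 1`. (In the paper's notation,
`G(0,s) = (-1)^s 2^{-2s-2} t^{s-1}`.) -/
theorem Fres_zero_leading_term (lam : ℚ) (s : ℕ) :
    Fres lam 0 s - (-1) ^ s * (2 : RatFunc ℚ) ^ (-(2 * (s : ℤ)) - 2) *
        RatFunc.X ^ ((s : ℤ) - 1) = 0 ∨
      (Fres lam 0 s - (-1) ^ s * (2 : RatFunc ℚ) ^ (-(2 * (s : ℤ)) - 2) *
        RatFunc.X ^ ((s : ℤ) - 1)).intDegree < (s : ℤ) - 1 := by
  have h := DserK.valuation_coeff_inv_divX_sub_leadTerm_le s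
  rw [← DserK.Fres_zero_eq_coeff_inv_divX lam] at h
  exact RatFunc.eq_zero_or_intDegree_lt_of_inftyValuation_lt
    (h.trans_lt (exp_lt_exp.2 (by omega)))
end
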